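/- arXiv:2412.19659 — 4 statements merged into one kernel-verified Lean document; each statement's English description precedes it below -/
import Mathlib

section
/- Let Γ be a (λ, μ)-smooth single-player game, i.e., there exists a strategy π* such that for every strategy π, (1/|I|) ∑_{I ∈ 𝓘} u(π*_I, π_{-I}) ≥ λ·OPT − μ·u(π), where OPT is the optimal utility. Then every EDT equilibrium π (a strategy satisfying u(π) ≥ u(π'_I, π_{-I}) for every infoset I and every deviation π'_I at I) satisfies u(π) ≥ (λ/(1+μ))·OPT. -/
open Finset

/-- price-of-anarchy bound for smooth single-player
imperfect-recall games. If the game is `(lam, mu)`-smooth via a strategy `πstar`,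
then every EDT equilibrium `π` satisfies `u π ≥ (lam / (1 + mu)) * OPT`. -/
theorem smooth_game_edt_bound
    {ι : Type*} [Fintype ι] [DecidableEq ι] [Nonempty ι]
    {S : ι → Type*} (u : (∀ i, S i) → ℝ) (hu0 : ∀ π, 0 ≤ u π)
    (OPT : ℝ) (hOPT : ∀ π, u π ≤ OPT)
    (lam mu : ℝ) (hlam : 0 < lam) (hmu : 0 ≤ mu)
    (πstar : ∀ i, S i)
    (hsmooth : ∀ π : ∀ i, S i,
      lam * OPT - mu * u π ≤
        (1 / (Fintype.card ι : ℝ)) * ∑ i, u (Function.update π i (πstar i)))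
    (π : ∀ i, S i)
    (hEDT : ∀ (i : ι) (σ : S i), u (Function.update π i σ) ≤ u π) :
    (lam / (1 + mu)) * OPT ≤ u π := by
  have hcard : (0:ℝ) < Fintype.card ι := by
    exact_mod_cast Fintype.card_pos
  have hsum : (1 / (Fintype.card ι : ℝ)) * ∑ i, u (Function.update π i (πstar i)) ≤ u π := by
    have h : ∑ i, u (Function.update π i (πstar i)) ≤ ∑ _i : ι, u π :=
      Finset.sum_le_sum fun i _ => hEDT i (πstar i)
    rw [Finset.sum_const, Finset.card_univ, nsmul_eq_mul] at h
    rw [one_div, inv_mul_le_iff₀ hcard]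
    linarith
  have key : lam * OPT ≤ (1 + mu) * u π := by
    have := (hsmooth π).trans hsum
    nlinarith [hu0 π]
  rw [div_mul_eq_mul_div, div_le_iff₀ (by linarith : (0:ℝ) < 1 + mu)]
  linarith
end

section
/- The valid-utility game construction is (1,1)-smooth: Let E be a finite ground set and V : 2^E → ℝ a nonnegative, nondecreasing, submodular set function. Let 𝓘 = {I_1,…,I_n} be indices with action sets A_I ⊆ 2^E, and for an action profile a let U(a) = ⋃_I a_I and utility u(a) = V(U(a)). Then for any two action profiles a, a*: ∑_{k=1}^n [V(U(a*_{I_k}, a_{-I_k})) − V(U(∅, a_{-I_k}))] ≥ V(U(a*)) − V(U(a)). -/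
open Finset

/-- the valid-utility game construction is (1,1)-smooth. For
nonnegative, nondecreasing, submodular `V` on subsets of a finite set `E`, and
action profiles `a, astar : Fin n → Finset E`,
`∑_k [V(U(astar_k, a_{-k})) − V(U(∅, a_{-k}))] ≥ V(U(astar)) − V(U(a))`. -/
theorem valid_utility_smooth
    {E : Type*} [Fintype E] [DecidableEq E]
    (V : Finset E → ℝ)
    (hV0 : ∀ X, 0 ≤ V X)
    (hVmono : ∀ X Y : Finset E, X ⊆ Y → V X ≤ V Y)
    (hVsub : ∀ X Y : Finset E, V (X ∩ Y) + V (X ∪ Y) ≤ V X + V Y)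
    (n : ℕ) (a astar : Fin n → Finset E) :
    V (univ.biUnion astar) - V (univ.biUnion a) ≤
      ∑ k, (V (univ.biUnion (Function.update a k (astar k)))
            - V (univ.biUnion (Function.update a k (∅ : Finset E)))) := by
  classical
  set A := univ.biUnion a with hA
  have key : ∀ B C D : Finset E, B ⊆ C → V (C ∪ D) - V C ≤ V (B ∪ D) - V B := by
    intro B C D hBC
    have h1 := hVsub (B ∪ D) C
    have h2 : V B ≤ V ((B ∪ D) ∩ C) :=
      hVmono _ _ (subset_inter subset_union_left hBC)
    have h3 : V (C ∪ D) ≤ V ((B ∪ D) ∪ C) := hVmono _ _ (by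
      intro x hx; simp only [mem_union] at hx ⊢; tauto)
    linarith
  have hupd : ∀ (k : Fin n) (s : Finset E),
      univ.biUnion (Function.update a k s) = s ∪ univ.biUnion (Function.update a k ∅) := by
    intro k s
    ext x
    simp only [mem_biUnion, mem_union, mem_univ, true_and]
    constructor
    · rintro ⟨j, hj⟩
      by_cases hjk : j = k
      · subst hjk; simp only [Function.update_self] at hj; exact Or.inl hj
      · exact Or.inr ⟨j, by simpa [Function.update_of_ne hjk] using hj⟩
    · rintro (hx | ⟨j, hj⟩)
      · exact ⟨k, by simp [hx]⟩
      · by_cases hjk : j = k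
        · subst hjk; simp at hj
        · exact ⟨j, by simpa [Function.update_of_ne hjk] using hj⟩
  set g : ℕ → Finset E := fun m =>
    A ∪ (univ.filter (fun j : Fin n => (j : ℕ) < m)).biUnion astar with hg
  have hg0 : g 0 = A := by simp [hg]
  have hgn : g n = A ∪ univ.biUnion astar := by
    have : (univ.filter (fun j : Fin n => (j : ℕ) < n)) = univ := by
      ext j; simp [j.is_lt]
    simp [hg, this]
  have hstep : ∀ k : Fin n, g ((k : ℕ) + 1) = g k ∪ astar k := by
    intro k
    have hfil : (univ.filter (fun j : Fin n => (j : ℕ) < (k : ℕ) + 1)) =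
        insert k (univ.filter (fun j : Fin n => (j : ℕ) < (k : ℕ))) := by
      ext j
      simp only [mem_filter, mem_univ, true_and, mem_insert, Nat.lt_succ_iff_lt_or_eq]
      constructor
      · rintro (h | h)
        · exact Or.inr (by simpa using h)
        · exact Or.inl (Fin.ext h)
      · rintro (h | h)
        · exact Or.inr (by simp [h])
        · exact Or.inl (by simpa using h)
    simp only [hg, hfil, Finset.biUnion_insert]
    ext x; simp only [mem_union]; tauto
  have hmain : V (g n) - V (g 0) ≤
      ∑ k, (V (univ.biUnion (Function.update a k (astar k)))
            - V (univ.biUnion (Function.update a k (∅ : Finset E)))) := by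
    have htel : V (g n) - V (g 0) = ∑ k : Fin n, (V (g ((k : ℕ) + 1)) - V (g k)) := by
      rw [Fin.sum_univ_eq_sum_range (fun m => V (g (m + 1)) - V (g m)),
        Finset.sum_range_sub (fun m => V (g m))]
    rw [htel]
    apply Finset.sum_le_sum
    intro k _
    set B := univ.biUnion (Function.update a k (∅ : Finset E)) with hB
    have hBA : B ⊆ g k := by
      intro x hx
      simp only [hB, mem_biUnion, mem_univ, true_and] at hx
      obtain ⟨j, hj⟩ := hx
      by_cases hjk : j = k
      · subst hjk; simp at hj
      · rw [Function.update_of_ne hjk] at hj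
        exact mem_union_left _ (mem_biUnion.2 ⟨j, mem_univ _, hj⟩)
    have := key B (g k) (astar k) hBA
    rw [hstep k, hupd k (astar k)]
    calc V (g k ∪ astar k) - V (g k) ≤ V (B ∪ astar k) - V B := this
      _ = V (astar k ∪ B) - V B := by rw [union_comm]
  calc V (univ.biUnion astar) - V A
      ≤ V (A ∪ univ.biUnion astar) - V A := by
        have := hVmono (univ.biUnion astar) (A ∪ univ.biUnion astar) subset_union_right
        linarith
    _ = V (g n) - V (g 0) := by rw [hg0, hgn]
    _ ≤ _ := hmain
end

section
/- For a nonnegative, nondecreasing, submodular function V on subsets of a finite set E and any action profile a = (a_{I_1},…,a_{I_n}) with a_{I_k} ⊆ E, it holds that ∑_{k=1}^n V(U(∅, a_{-I_k})) ≥ (n−1)·V(U(a)), where U(a) = ⋃_k a_{I_k} and U(∅, a_{-I_k}) = ⋃_{j ≠ k} a_{I_j}. -/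
open Finset

/-- for nonnegative, nondecreasing, submodular `V` and any profile
of sets `a : Fin n → Finset E` (n ≥ 1),
`∑_k V(⋃_{j≠k} a_j) ≥ (n−1)·V(⋃_j a_j)`. -/
theorem sum_leave_one_out_ge
    {E : Type*} [Fintype E] [DecidableEq E]
    (V : Finset E → ℝ)
    (hV0 : ∀ X, 0 ≤ V X)
    (hVmono : ∀ X Y : Finset E, X ⊆ Y → V X ≤ V Y)
    (hVsub : ∀ X Y : Finset E, V (X ∩ Y) + V (X ∪ Y) ≤ V X + V Y)
    (n : ℕ) (hn : 1 ≤ n) (a : Fin n → Finset E) :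
    ((n : ℝ) - 1) * V (univ.biUnion a) ≤
      ∑ k, V (univ.biUnion (Function.update a k (∅ : Finset E))) := by
  classical
  set U : Finset E := univ.biUnion a with hU
  -- prefix unions
  set S : ℕ → Finset E := fun m => (univ.filter (fun j : Fin n => j.val < m)).biUnion a
    with hS
  have hS0 : S 0 = ∅ := by
    simp [hS]
  have hSn : S n = U := by
    simp [hS, hU, Fin.is_lt]
  -- leave-one-out set
  have hmem_loo : ∀ (k j : Fin n), j ≠ k →
      a j ⊆ univ.biUnion (Function.update a k (∅ : Finset E)) := by
    intro k j hjk
    intro x hx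
    simp only [mem_biUnion, mem_univ, true_and]
    exact ⟨j, by simpa [Function.update_of_ne hjk] using hx⟩
  -- key per-k inequality
  have key : ∀ k : Fin n,
      V U + V (S k.val) ≤ V (S (k.val + 1)) +
        V (univ.biUnion (Function.update a k (∅ : Finset E))) := by
    intro k
    set W := univ.biUnion (Function.update a k (∅ : Finset E)) with hW
    have h1 : S k.val ⊆ S (k.val + 1) ∩ W := by
      intro x hx
      simp only [hS, mem_biUnion, mem_filter, mem_univ, true_and] at hx
      obtain ⟨j, hj, hxj⟩ := hx
      refine mem_inter.mpr ⟨?_, ?_⟩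
      · simp only [hS, mem_biUnion, mem_filter, mem_univ, true_and]
        exact ⟨j, Nat.lt_succ_of_lt hj, hxj⟩
      · exact hmem_loo k j (by intro h; subst h; exact lt_irrefl _ hj) hxj
    have h2 : U ⊆ S (k.val + 1) ∪ W := by
      intro x hx
      simp only [hU, mem_biUnion, mem_univ, true_and] at hx
      obtain ⟨j, hxj⟩ := hx
      by_cases hjk : j = k
      · subst hjk
        refine mem_union_left _ ?_
        simp only [hS, mem_biUnion, mem_filter, mem_univ, true_and]
        exact ⟨j, Nat.lt_succ_self _, hxj⟩
      · exact mem_union_right _ (hmem_loo k j hjk hxj)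
    have := hVsub (S (k.val + 1)) W
    have hA := hVmono _ _ h1
    have hB := hVmono _ _ h2
    linarith
  -- sum the inequalities
  have hsum : (n : ℝ) * V U + ∑ k : Fin n, V (S k.val)
      ≤ ∑ k : Fin n, V (S (k.val + 1)) +
        ∑ k, V (univ.biUnion (Function.update a k (∅ : Finset E))) := by
    have := Finset.sum_le_sum (s := univ) (fun k _ => key k)
    simpa [Finset.sum_add_distrib, Finset.card_univ, mul_comm] using this
  -- telescoping
  have htel : ∑ k : Fin n, V (S (k.val + 1)) - ∑ k : Fin n, V (S k.val)
      = V (S n) - V (S 0) := by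
    rw [Fin.sum_univ_eq_sum_range (fun i => V (S (i + 1))),
      Fin.sum_univ_eq_sum_range (fun i => V (S i))]
    rw [← Finset.sum_sub_distrib]
    exact Finset.sum_range_sub (fun i => V (S i)) n
  have h0 : 0 ≤ V (S 0) := hV0 _
  rw [hSn] at htel
  nlinarith [hsum, htel, h0]
end

section
/- Define Π_k(a) = V(⋃_j a_j) − V(⋃_{j≠k} a_j) for a set function V and sets a_1,…,a_n ⊆ E. If V is nonnegative, nondecreasing and submodular, then ∑_{k=1}^n Π_k(a) ≤ V(⋃_j a_j). -/
open Finset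

/-- marginal contributions `Π_k(a) = V(⋃_j a_j) − V(⋃_{j≠k} a_j)`
of a nonnegative, nondecreasing, submodular `V` sum to at most `V(⋃_j a_j)`. -/
theorem sum_marginal_le_total
    {E : Type*} [Fintype E] [DecidableEq E]
    (V : Finset E → ℝ)
    (hV0 : ∀ X, 0 ≤ V X)
    (hVmono : ∀ X Y : Finset E, X ⊆ Y → V X ≤ V Y)
    (hVsub : ∀ X Y : Finset E, V (X ∩ Y) + V (X ∪ Y) ≤ V X + V Y)
    (n : ℕ) (a : Fin n → Finset E) :
    ∑ k, (V (univ.biUnion a)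
          - V (univ.biUnion (Function.update a k (∅ : Finset E)))) ≤
      V (univ.biUnion a) := by
  classical
  set U : Finset E := univ.biUnion a with hU
  -- prefix unions
  set P : ℕ → Finset E := fun m => (univ.filter (fun j : Fin n => (j : ℕ) < m)).biUnion a
    with hP
  have hP0 : P 0 = ∅ := by
    simp [hP]
  have hPn : P n = U := by
    simp [hP, hU, Finset.filter_true_of_mem fun (j : Fin n) _ => j.isLt]
  have hPsucc : ∀ k : Fin n, P ((k : ℕ) + 1) = P (k : ℕ) ∪ a k := by
    intro k
    ext e
    simp only [hP, Finset.mem_biUnion, Finset.mem_filter, Finset.mem_univ, true_and,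
      Finset.mem_union]
    constructor
    · rintro ⟨j, hj, he⟩
      rcases Nat.lt_succ_iff_lt_or_eq.mp hj with h | h
      · exact Or.inl ⟨j, h, he⟩
      · exact Or.inr (by rwa [Fin.eq_of_val_eq h] at he)
    · rintro (⟨j, hj, he⟩ | he)
      · exact ⟨j, Nat.lt_succ_of_lt hj, he⟩
      · exact ⟨k, Nat.lt_succ_self _, he⟩
  have key : ∀ k : Fin n,
      V U - V (univ.biUnion (Function.update a k (∅ : Finset E)))
        ≤ V (P ((k : ℕ) + 1)) - V (P (k : ℕ)) := by
    intro k
    set W : Finset E := univ.biUnion (Function.update a k (∅ : Finset E)) with hW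
    have hWmem : ∀ e, e ∈ W ↔ ∃ j, j ≠ k ∧ e ∈ a j := by
      intro e
      simp only [hW, Finset.mem_biUnion, Finset.mem_univ, true_and]
      constructor
      · rintro ⟨j, hj⟩
        by_cases h : j = k
        · subst h; simp [Function.update_self] at hj
        · exact ⟨j, h, by rwa [Function.update_of_ne h] at hj⟩
      · rintro ⟨j, hj, he⟩
        exact ⟨j, by rwa [Function.update_of_ne hj]⟩
    have hWU : W ∪ a k = U := by
      ext e
      simp only [Finset.mem_union, hWmem, hU, Finset.mem_biUnion, Finset.mem_univ, true_and]
      constructor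
      · rintro (⟨j, _, he⟩ | he)
        · exact ⟨j, he⟩
        · exact ⟨k, he⟩
      · rintro ⟨j, he⟩
        by_cases h : j = k
        · subst h; exact Or.inr he
        · exact Or.inl ⟨j, h, he⟩
    have hPW : P (k : ℕ) ⊆ W := by
      intro e he
      simp only [hP, Finset.mem_biUnion, Finset.mem_filter, Finset.mem_univ, true_and] at he
      obtain ⟨j, hj, he⟩ := he
      exact (hWmem e).mpr ⟨j, fun h => absurd (congrArg Fin.val h) (Nat.ne_of_lt hj), he⟩
    have hPPk : P (k : ℕ) ⊆ W ∩ P ((k : ℕ) + 1) := by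
      intro e he
      refine Finset.mem_inter.mpr ⟨hPW he, ?_⟩
      rw [hPsucc k]; exact Finset.mem_union_left _ he
    have hsub := hVsub W (P ((k : ℕ) + 1))
    have hWUeq : W ∪ P ((k : ℕ) + 1) = U := by
      rw [hPsucc k, ← Finset.union_assoc, Finset.union_eq_left.mpr hPW, hWU]
    rw [hWUeq] at hsub
    have hmono := hVmono _ _ hPPk
    linarith
  have tele : ∑ k : Fin n, (V (P ((k : ℕ) + 1)) - V (P (k : ℕ))) = V (P n) - V (P 0) := by
    rw [Fin.sum_univ_eq_sum_range (fun i => V (P (i + 1)) - V (P i))]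
    exact Finset.sum_range_sub (fun i => V (P i)) n
  calc ∑ k, (V U - V (univ.biUnion (Function.update a k (∅ : Finset E))))
      ≤ ∑ k : Fin n, (V (P ((k : ℕ) + 1)) - V (P (k : ℕ))) :=
        Finset.sum_le_sum fun k _ => key k
    _ = V (P n) - V (P 0) := tele
    _ ≤ V U := by rw [hPn, hP0]; linarith [hV0 (∅ : Finset E)]
end
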